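/- arXiv:1804.03176 — 5 statements merged into one kernel-verified Lean document; each statement's English description precedes it below -/
import Mathlib

section
/- Let f : R^m → R be convex differentiable, X ⊆ R^m convex, M a d×m matrix, λ > 0, and define L(x,y) := f(x) + ⟨y, Mx⟩ + (λ/2)‖Mx‖². Then for any y ∈ R^d, the value Mx̂ is the same for every minimizer x̂ of L(·,y) over X. -/
open Set RealInnerProductSpace

/-!
Write `L(·,y)` as the convex function `x ↦ f x + ⟪y, M x⟫` plus `(λ/2)‖M x‖²`, a strictly convex
function of `M x`. If two minimizers had different images under `M`, the value at their midpoint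
would be strictly below the average of their (equal, minimal) values.
-/

theorem norm_smul_add_smul_sq {F : Type*} [NormedAddCommGroup F] [InnerProductSpace ℝ F]
    (u v : F) {a b : ℝ} (hab : a + b = 1) :
    ‖a • u + b • v‖ ^ 2 = a * ‖u‖ ^ 2 + b * ‖v‖ ^ 2 - a * b * ‖u - v‖ ^ 2 := by
  obtain rfl : b = 1 - a := by linarith
  rw [norm_add_sq_real, norm_sub_sq_real, norm_smul, norm_smul, real_inner_smul_left,
    real_inner_smul_right, Real.norm_eq_abs, Real.norm_eq_abs, mul_pow, mul_pow, sq_abs, sq_abs]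
  ring

theorem strictConvexOn_norm_sq (F : Type*) [NormedAddCommGroup F] [InnerProductSpace ℝ F] :
    StrictConvexOn ℝ univ (fun v : F => ‖v‖ ^ 2) := by
  refine ⟨convex_univ, fun u _ v _ huv a b ha hb hab => ?_⟩
  have hdist : 0 < ‖u - v‖ := norm_pos_iff.2 (sub_ne_zero.2 huv)
  simp only [smul_eq_mul, norm_smul_add_smul_sq u v hab]
  nlinarith [mul_pos (mul_pos ha hb) (pow_pos hdist 2)]

theorem StrictConvexOn.const_mul {E : Type*} [AddCommGroup E] [Module ℝ E] {s : Set E}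
    {f : E → ℝ} (hf : StrictConvexOn ℝ s f) {c : ℝ} (hc : 0 < c) :
    StrictConvexOn ℝ s (fun x => c * f x) :=
  ⟨hf.1, fun x hx y hy hxy a b ha hb hab => by
    simpa only [smul_eq_mul, mul_add, mul_left_comm c] using
      mul_lt_mul_of_pos_left (hf.2 hx hy hxy ha hb hab) hc⟩

theorem ConvexOn.map_eq_of_isMinOn_add_comp {E F : Type*} [AddCommGroup E] [Module ℝ E]
    [AddCommGroup F] [Module ℝ F] {s : Set E} {g : E → ℝ} {h : F → ℝ}
    (hg : ConvexOn ℝ s g) (hh : StrictConvexOn ℝ univ h) (M : E →ₗ[ℝ] F) {x₁ x₂ : E}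
    (hx₁ : x₁ ∈ s) (hx₂ : x₂ ∈ s) (hmin₁ : IsMinOn (fun x => g x + h (M x)) s x₁)
    (hmin₂ : IsMinOn (fun x => g x + h (M x)) s x₂) : M x₁ = M x₂ := by
  by_contra hne
  set z := (2 : ℝ)⁻¹ • x₁ + (2 : ℝ)⁻¹ • x₂
  have hz : z ∈ s := hg.1 hx₁ hx₂ (by norm_num) (by norm_num) (by norm_num)
  have hgz : g z ≤ 2⁻¹ * g x₁ + 2⁻¹ * g x₂ :=
    hg.2 hx₁ hx₂ (by norm_num) (by norm_num) (by norm_num)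
  have hhz : h (M z) < 2⁻¹ * h (M x₁) + 2⁻¹ * h (M x₂) := by
    simpa only [z, map_add, map_smul, smul_eq_mul] using
      hh.2 (mem_univ _) (mem_univ _) hne (by norm_num) (by norm_num) (by norm_num)
  have h₁ : g x₁ + h (M x₁) ≤ g z + h (M z) := hmin₁ hz
  have h₂ : g x₂ + h (M x₂) ≤ g z + h (M z) := hmin₂ hz
  linarith

theorem Mxhat_unique_general {m d : ℕ}
    (f : EuclideanSpace ℝ (Fin m) → ℝ)
    (hf : ConvexOn ℝ univ f)
    (X : Set (EuclideanSpace ℝ (Fin m))) (hX : Convex ℝ X)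
    (M : EuclideanSpace ℝ (Fin m) →L[ℝ] EuclideanSpace ℝ (Fin d))
    (lam : ℝ) (hlam : 0 < lam)
    (L : EuclideanSpace ℝ (Fin m) → EuclideanSpace ℝ (Fin d) → ℝ)
    (hL : ∀ x y, L x y = f x + ⟪y, M x⟫ + lam / 2 * ‖M x‖ ^ 2)
    (y : EuclideanSpace ℝ (Fin d))
    (x₁ x₂ : EuclideanSpace ℝ (Fin m))
    (hx₁ : x₁ ∈ X) (hx₂ : x₂ ∈ X)
    (hmin₁ : IsMinOn (fun x => L x y) X x₁)
    (hmin₂ : IsMinOn (fun x => L x y) X x₂) :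
    M x₁ = M x₂ := by
  have hconv : ConvexOn ℝ X (fun x => f x + ⟪y, M x⟫) :=
    (hf.subset (subset_univ X) hX).add ((innerSL ℝ y ∘L M).toLinearMap.convexOn hX)
  have hLy : (fun x => L x y) = fun x => (f x + ⟪y, M x⟫) + lam / 2 * ‖M x‖ ^ 2 :=
    funext fun x => hL x y
  rw [hLy] at hmin₁ hmin₂
  exact hconv.map_eq_of_isMinOn_add_comp ((strictConvexOn_norm_sq _).const_mul (half_pos hlam))
    M.toLinearMap hx₁ hx₂ hmin₁ hmin₂

/-- For the augmented Lagrangian `L(x,y) = f x + ⟪y, M x⟫ + (λ/2)‖M x‖²` with `f` convex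
differentiable, `X` convex and `λ > 0`, the value `M x̂` is the same for every minimizer
`x̂` of `L(·,y)` over `X`. -/
theorem Mxhat_unique {m d : ℕ}
    (f : EuclideanSpace ℝ (Fin m) → ℝ)
    (hf : ConvexOn ℝ univ f) (hfd : Differentiable ℝ f)
    (X : Set (EuclideanSpace ℝ (Fin m))) (hX : Convex ℝ X)
    (M : EuclideanSpace ℝ (Fin m) →L[ℝ] EuclideanSpace ℝ (Fin d))
    (lam : ℝ) (hlam : 0 < lam)
    (L : EuclideanSpace ℝ (Fin m) → EuclideanSpace ℝ (Fin d) → ℝ)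
    (hL : ∀ x y, L x y = f x + ⟪y, M x⟫ + lam / 2 * ‖M x‖ ^ 2)
    (y : EuclideanSpace ℝ (Fin d))
    (x₁ x₂ : EuclideanSpace ℝ (Fin m))
    (hx₁ : x₁ ∈ X) (hx₂ : x₂ ∈ X)
    (hmin₁ : IsMinOn (fun x => L x y) X x₁)
    (hmin₂ : IsMinOn (fun x => L x y) X x₂) :
    M x₁ = M x₂ :=
  Mxhat_unique_general f hf X hX M lam hlam L hL y x₁ x₂ hx₁ hx₂ hmin₁ hmin₂
end

section
/- Let f : R^m → R be convex differentiable, X ⊆ R^m convex compact, M a d×m matrix, λ > 0, L(x,y) := f(x) + ⟨y, Mx⟩ + (λ/2)‖Mx‖², and for y ∈ R^d let x̂(y) ∈ argmin_{x∈X} L(x,y). Then for all y, y' ∈ R^d, ‖M x̂(y) − M x̂(y')‖ ≤ (1/λ)‖y − y'‖. -/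
/-!
Along the segment from a minimizer `x` of `L(·, y)` towards another point `x'` of `X`,
convexity bounds `f` by its chord, so `t ↦ L(x + t (x' - x), y) - L(x, y) ≥ 0` is dominated by
`t a + t² b` with `a = f x' - f x + ⟪y + λ M x, M x' - M x⟫`; letting `t → 0⁺` gives `0 ≤ a`
without differentiating `f`. Adding this inequality at `(y, x̂ y)` and at `(y', x̂ y')` cancels
`f` and leaves `λ ‖M x̂ y - M x̂ y'‖² ≤ ⟪y - y', M x̂ y' - M x̂ y⟫`; Cauchy–Schwarz concludes.
-/

open Set RealInnerProductSpace Filter Topology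

lemma nonneg_of_forall_nonneg_add_mul {a b : ℝ} (h : ∀ t ∈ Ioc (0 : ℝ) 1, 0 ≤ a + t * b) :
    0 ≤ a := by
  have hlim : Tendsto (fun t : ℝ => a + t * b) (𝓝[>] 0) (𝓝 a) := by
    have : Continuous fun t : ℝ => a + t * b := by fun_prop
    simpa using (this.tendsto 0).mono_left nhdsWithin_le_nhds
  exact ge_of_tendsto hlim (eventually_of_mem (Ioc_mem_nhdsGT one_pos) h)

variable {E F : Type*} [AddCommGroup E] [Module ℝ E] [NormedAddCommGroup F]
  [InnerProductSpace ℝ F]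

lemma ConvexOn.le_add_smul_sub {X : Set E} {f : E → ℝ} (hf : ConvexOn ℝ X f) {x x' : E}
    (hx : x ∈ X) (hx' : x' ∈ X) {t : ℝ} (ht : t ∈ Icc (0 : ℝ) 1) : f (x + t • (x' - x)) ≤ f x + t * (f x' - f x) := by
  have h := hf.2 hx hx' (sub_nonneg.2 ht.2) ht.1 (sub_add_cancel 1 t)
  rw [show (1 - t) • x + t • x' = x + t • (x' - x) by module] at h
  simp only [smul_eq_mul] at h
  linarith

lemma IsMinOn.sub_add_mul_inner_nonneg {X : Set E} {f : E → ℝ}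
    (hf : ConvexOn ℝ X f) (A : E →ₗ[ℝ] F) (lam : ℝ) {x x' : E} (hx : x ∈ X) (hx' : x' ∈ X)
    (hmin : IsMinOn (fun z => f z + lam / 2 * ‖A z‖ ^ 2) X x) :
    0 ≤ f x' - f x + lam * ⟪A x, A x' - A x⟫ := by
  refine nonneg_of_forall_nonneg_add_mul (b := lam / 2 * ‖A x' - A x‖ ^ 2) fun t ht => ?_
  have ht' : t ∈ Icc (0 : ℝ) 1 := Ioc_subset_Icc_self ht
  have hmin_t : f x + lam / 2 * ‖A x‖ ^ 2 ≤
      f (x + t • (x' - x)) + lam / 2 * ‖A (x + t • (x' - x))‖ ^ 2 :=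
    hmin (hf.1.add_smul_sub_mem hx hx' ht')
  have hconv := hf.le_add_smul_sub hx hx' ht'
  have hsq : ‖A (x + t • (x' - x))‖ ^ 2 =
      ‖A x‖ ^ 2 + 2 * t * ⟪A x, A x' - A x⟫ + t ^ 2 * ‖A x' - A x‖ ^ 2 := by
    rw [map_add, map_smul, map_sub, norm_add_sq_real, inner_smul_right, norm_smul, mul_pow,
      Real.norm_eq_abs, sq_abs]
    ring
  have hscaled :
      0 ≤ t * (f x' - f x + lam * ⟪A x, A x' - A x⟫ + t * (lam / 2 * ‖A x' - A x‖ ^ 2)) := by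
    rw [hsq] at hmin_t
    linarith
  exact nonneg_of_mul_nonneg_right hscaled ht.1

lemma IsMinOn.sub_add_inner_nonneg {X : Set E} {f : E → ℝ} (hf : ConvexOn ℝ X f)
    (A : E →ₗ[ℝ] F) (y : F) (lam : ℝ) {x x' : E} (hx : x ∈ X) (hx' : x' ∈ X)
    (hmin : IsMinOn (fun z => f z + ⟪y, A z⟫ + lam / 2 * ‖A z‖ ^ 2) X x) :
    0 ≤ f x' - f x + ⟪y + lam • A x, A x' - A x⟫ := by
  have hconv : ConvexOn ℝ X (fun z => f z + ⟪y, A z⟫) :=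
    hf.add (((innerSL ℝ y).toLinearMap.comp A).convexOn hf.1)
  have h := hmin.sub_add_mul_inner_nonneg hconv A lam hx hx'
  simp only [inner_add_left, real_inner_smul_left, inner_sub_right] at h ⊢
  linarith

lemma mul_norm_map_sub_le_of_isMinOn {X : Set E} {f : E → ℝ} (hf : ConvexOn ℝ X f)
    (A : E →ₗ[ℝ] F) (lam : ℝ) {y y' : F} {x x' : E} (hx : x ∈ X) (hx' : x' ∈ X)
    (hmin : IsMinOn (fun z => f z + ⟪y, A z⟫ + lam / 2 * ‖A z‖ ^ 2) X x)
    (hmin' : IsMinOn (fun z => f z + ⟪y', A z⟫ + lam / 2 * ‖A z‖ ^ 2) X x') :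
    lam * ‖A x - A x'‖ ≤ ‖y - y'‖ := by
  have h₁ := hmin.sub_add_inner_nonneg hf A y lam hx hx'
  have h₂ := hmin'.sub_add_inner_nonneg hf A y' lam hx' hx
  set u := A x
  set v := A x'
  have hmono : lam * ‖u - v‖ ^ 2 ≤ ‖y - y'‖ * ‖u - v‖ := calc
    lam * ‖u - v‖ ^ 2 ≤ ⟪y - y', v - u⟫ := by
      rw [← real_inner_self_eq_norm_sq]
      simp only [inner_add_left, real_inner_smul_left, inner_sub_left, inner_sub_right,
        real_inner_comm u v] at h₁ h₂ ⊢
      linarith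
    _ ≤ ‖y - y'‖ * ‖u - v‖ := norm_sub_rev u v ▸ real_inner_le_norm _ _
  rcases (norm_nonneg (u - v)).eq_or_lt with h0 | h0
  · rw [← h0, mul_zero]
    positivity
  · nlinarith

theorem Mxhat_lipschitz_general {m d : ℕ}
    (f : EuclideanSpace ℝ (Fin m) → ℝ)
    (hf : ConvexOn ℝ univ f)
    (X : Set (EuclideanSpace ℝ (Fin m))) (hX : Convex ℝ X)
    (M : EuclideanSpace ℝ (Fin m) →L[ℝ] EuclideanSpace ℝ (Fin d))
    (lam : ℝ) (hlam : 0 < lam)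
    (L : EuclideanSpace ℝ (Fin m) → EuclideanSpace ℝ (Fin d) → ℝ)
    (hL : ∀ x y, L x y = f x + ⟪y, M x⟫ + lam / 2 * ‖M x‖ ^ 2)
    (xhat : EuclideanSpace ℝ (Fin d) → EuclideanSpace ℝ (Fin m))
    (hxhat : ∀ y, xhat y ∈ X ∧ IsMinOn (fun x => L x y) X (xhat y))
    (y y' : EuclideanSpace ℝ (Fin d)) :
    ‖M (xhat y) - M (xhat y')‖ ≤ (1 / lam) * ‖y - y'‖ := by
  have hmin : ∀ y, IsMinOn (fun z => f z + ⟪y, M.toLinearMap z⟫ +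
      lam / 2 * ‖M.toLinearMap z‖ ^ 2) X (xhat y) := fun y => by
    simpa only [hL, ContinuousLinearMap.coe_coe] using (hxhat y).2
  rw [one_div_mul_eq_div, le_div_iff₀' hlam]
  exact mul_norm_map_sub_le_of_isMinOn (hf.subset (subset_univ X) hX) M.toLinearMap lam
    (hxhat y).1 (hxhat y').1 (hmin y) (hmin y')

/-- The map `y ↦ M x̂(y)`, where `x̂(y)` minimizes the augmented Lagrangian `L(·,y)` over
the convex compact set `X`, is `(1/λ)`-Lipschitz. -/
theorem Mxhat_lipschitz {m d : ℕ}
    (f : EuclideanSpace ℝ (Fin m) → ℝ)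
    (hf : ConvexOn ℝ univ f) (hfd : Differentiable ℝ f)
    (X : Set (EuclideanSpace ℝ (Fin m))) (hX : Convex ℝ X) (hXc : IsCompact X)
    (M : EuclideanSpace ℝ (Fin m) →L[ℝ] EuclideanSpace ℝ (Fin d))
    (lam : ℝ) (hlam : 0 < lam)
    (L : EuclideanSpace ℝ (Fin m) → EuclideanSpace ℝ (Fin d) → ℝ)
    (hL : ∀ x y, L x y = f x + ⟪y, M x⟫ + lam / 2 * ‖M x‖ ^ 2)
    (xhat : EuclideanSpace ℝ (Fin d) → EuclideanSpace ℝ (Fin m))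
    (hxhat : ∀ y, xhat y ∈ X ∧ IsMinOn (fun x => L x y) X (xhat y))
    (y y' : EuclideanSpace ℝ (Fin d)) :
    ‖M (xhat y) - M (xhat y')‖ ≤ (1 / lam) * ‖y - y'‖ :=
  Mxhat_lipschitz_general f hf X hX M lam hlam L hL xhat hxhat y y'
end

section
/- Let (Δ_t) be a sequence of nonnegative reals satisfying Δ_{t+1} − Δ_t ≤ −(2/(t+2)) min{Δ_{t+1}, δ} + (2/(t+2))² C/2 for all t, with δ, C > 0. If there exists t_0 > C/δ − 2 with Δ_{t_0} ≤ δ, then for all t ≥ t_0, Δ_t ≤ min{4δ(t_0+2)/(t+2), δ}. -/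
/-!
Write `s = t + 2`, so the step size is `2 / s`. Since `s ≥ t₀ + 2 > C / δ`, the decrease `2δ / s`
forced while `Δ` exceeds `δ` beats the error `2C / s²`; hence `Δ` can never climb above `δ`, and
then `min Δ_{t+1} δ = Δ_{t+1}`. The recurrence becomes `(1 + 2/s) Δ_{t+1} ≤ Δ_t + 2C/s²`, and with
`B = 4δ(t₀ + 2) ≥ 4C` the bound `Δ_t ≤ B / s` propagates to `Δ_{t+1} ≤ B / (s + 1)`.
-/

section FrankWolfeStep

variable {x y δ C B s : ℝ}

theorem le_of_frankWolfe_step (hs : 0 < s) (hCs : C < δ * s) (hx : x ≤ δ)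
    (hstep : y - x ≤ -(2 / s) * min y δ + (2 / s) ^ 2 * C / 2) : y ≤ δ := by
  by_contra! hy
  rw [min_eq_right hy.le] at hstep
  have herror : (2 / s) ^ 2 * C / 2 < 2 / s * δ := by
    have hsplit : (2 / s) ^ 2 * C / 2 = 2 / s * (C / s) := by field_simp
    rw [hsplit]
    exact mul_lt_mul_of_pos_left ((div_lt_iff₀ hs).mpr hCs) (by positivity)
  linarith

theorem le_div_add_one_of_frankWolfe_step (hs : 1 ≤ s) (hB : 0 ≤ B) (hCB : 4 * C ≤ B)
    (hx : x ≤ B / s) (hy : y ≤ δ)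
    (hstep : y - x ≤ -(2 / s) * min y δ + (2 / s) ^ 2 * C / 2) : y ≤ B / (s + 1) := by
  have hs0 : 0 < s := by linarith
  rw [min_eq_left hy] at hstep
  have hcleared : (s ^ 2 + 2 * s) * y ≤ s ^ 2 * x + 2 * C := by
    have := mul_le_mul_of_nonneg_left hstep (sq_nonneg s)
    field_simp at this
    linarith
  have hsx : s ^ 2 * x ≤ s * B := by
    linear_combination s * (le_div_iff₀ hs0).mp hx
  have hcombined : (s * (s + 2)) * y ≤ s * B + B / 2 := by linear_combination hcleared + hsx + hCB / 2
  have hprod : (s + 1) * y * (s * (s + 2)) ≤ B * (s * (s + 2)) := by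
    linear_combination (s + 1) * hcombined + mul_nonneg hB (by linarith : 0 ≤ s - 1) / 2
  rw [le_div_iff₀ (by linarith), mul_comm]
  exact le_of_mul_le_mul_right hprod (by positivity)

end FrankWolfeStep

theorem sublinear_decrease_general
    (Δ : ℕ → ℝ)
    (δ C : ℝ) (hδ : 0 < δ)
    (hrec : ∀ t : ℕ, Δ (t + 1) - Δ t ≤
      -(2 / ((t : ℝ) + 2)) * min (Δ (t + 1)) δ + (2 / ((t : ℝ) + 2)) ^ 2 * C / 2)
    (t₀ : ℕ) (ht₀ : (t₀ : ℝ) > C / δ - 2) (hΔt₀ : Δ t₀ ≤ δ) :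
    ∀ t ≥ t₀, Δ t ≤ min (4 * δ * ((t₀ : ℝ) + 2) / ((t : ℝ) + 2)) δ := by
  have hCt₀ : C < δ * ((t₀ : ℝ) + 2) := by
    rw [gt_iff_lt, sub_lt_iff_lt_add, div_lt_iff₀ hδ] at ht₀
    linarith
  have hbound : ∀ t ≥ t₀, Δ t ≤ δ ∧ Δ t ≤ 4 * δ * ((t₀ : ℝ) + 2) / ((t : ℝ) + 2) := by
    intro t ht
    induction t, ht using Nat.le_induction with
    | base =>
      refine ⟨hΔt₀, ?_⟩
      rw [mul_div_assoc, div_self (by positivity), mul_one]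
      linarith
    | succ t ht ih =>
      have hts : (t₀ : ℝ) + 2 ≤ (t : ℝ) + 2 := by gcongr
      have hy := le_of_frankWolfe_step (by positivity) (hCt₀.trans_le (by gcongr)) ih.1 (hrec t)
      refine ⟨hy, ?_⟩
      rw [Nat.cast_succ, add_right_comm]
      exact le_div_add_one_of_frankWolfe_step (by linarith) (by positivity) (by linarith)
        ih.2 hy (hrec t)
  exact fun t ht => le_min (hbound t ht).2 (hbound t ht).1

/-- Sublinear decrease lemma: with step `η_t = 2/(t+2)`, once `Δ_{t₀} ≤ δ` for some
`t₀ > C/δ − 2`, we have `Δ_t ≤ min{4δ(t₀+2)/(t+2), δ}` for all `t ≥ t₀`. -/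
theorem sublinear_decrease
    (Δ : ℕ → ℝ) (hnn : ∀ t, 0 ≤ Δ t)
    (δ C : ℝ) (hδ : 0 < δ) (hC : 0 < C)
    (hrec : ∀ t : ℕ, Δ (t + 1) - Δ t ≤
      -(2 / ((t : ℝ) + 2)) * min (Δ (t + 1)) δ + (2 / ((t : ℝ) + 2)) ^ 2 * C / 2)
    (t₀ : ℕ) (ht₀ : (t₀ : ℝ) > C / δ - 2) (hΔt₀ : Δ t₀ ≤ δ) :
    ∀ t ≥ t₀, Δ t ≤ min (4 * δ * ((t₀ : ℝ) + 2) / ((t : ℝ) + 2)) δ :=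
  sublinear_decrease_general Δ δ C hδ hrec t₀ ht₀ hΔt₀
end

section
/- Let (Δ_t) be nonnegative reals with Δ_{t+1} − Δ_t ≤ −η_t δ + η_t² C/2 whenever Δ_t, Δ_{t+1} ≥ δ, where η_t = 2/(t+2) and δ, C > 0, and the full recurrence Δ_{t+1} − Δ_t ≤ −η_t min{Δ_{t+1},δ} + η_t² C/2 holds for all t. Then there exists a finite t_0 with Δ_{t_0} ≤ δ; i.e., it is impossible that Δ_t ≥ δ for all t. -/
/-!
Telescoping the descent inequality gives
`Δ_n ≤ Δ_0 - δ ∑_{t<n} η_t + (C/2) ∑_{t<n} η_t²`. With `η_t = 2/(t+2)` the first sum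
diverges like the harmonic series while the second converges, so `Δ_n → -∞`, contradicting
`Δ_n ≥ 0` if `Δ_t` stayed above `δ` forever.
-/

open Finset Filter

theorem tendsto_atBot_of_sub_le_neg_mul_add_sq {a η : ℕ → ℝ} {δ C : ℝ} (hδ : 0 < δ)
    (hC : 0 ≤ C) (hη : Tendsto (fun n ↦ ∑ t ∈ range n, η t) atTop atTop)
    (hη_sq : Summable fun t ↦ η t ^ 2)
    (hstep : ∀ t, a (t + 1) - a t ≤ -η t * δ + η t ^ 2 * C / 2) :
    Tendsto a atTop atBot := by
  have bound : ∀ n, a n ≤ (a 0 + (∑' t, η t ^ 2) * C / 2) + -(δ * ∑ t ∈ range n, η t) := by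
    intro n
    have telescope :
        a n - a 0 ≤ -(∑ t ∈ range n, η t) * δ + (∑ t ∈ range n, η t ^ 2) * C / 2 :=
      calc a n - a 0 = ∑ t ∈ range n, (a (t + 1) - a t) := (sum_range_sub a n).symm
        _ ≤ ∑ t ∈ range n, (-η t * δ + η t ^ 2 * C / 2) := sum_le_sum fun t _ ↦ hstep t
        _ = -(∑ t ∈ range n, η t) * δ + (∑ t ∈ range n, η t ^ 2) * C / 2 := by
          rw [sum_add_distrib, ← sum_mul, ← sum_div, ← sum_mul, sum_neg_distrib]
    have partial_le_tsum : ∑ t ∈ range n, η t ^ 2 ≤ ∑' t, η t ^ 2 :=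
      hη_sq.sum_le_tsum _ fun t _ ↦ sq_nonneg (η t)
    linarith [mul_le_mul_of_nonneg_right partial_le_tsum hC]
  exact tendsto_atBot_mono bound <| tendsto_atBot_add_const_left _ _ <|
    tendsto_neg_atTop_atBot.comp (hη.const_mul_atTop hδ)

theorem tendsto_sum_range_two_div_add_two :
    Tendsto (fun n ↦ ∑ t ∈ range n, 2 / ((t : ℝ) + 2)) atTop atTop := by
  refine tendsto_atTop_mono (fun n ↦ sum_le_sum fun t _ ↦ ?_)
    Real.tendsto_sum_range_one_div_nat_succ_atTop
  rw [div_le_div_iff₀ (by positivity) (by positivity)]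
  linarith

theorem summable_two_div_add_two_sq : Summable fun t : ℕ ↦ (2 / ((t : ℝ) + 2)) ^ 2 := by
  have h := (summable_nat_add_iff 2).mpr (Real.summable_one_div_nat_pow.mpr one_lt_two)
  refine (h.mul_left 4).congr fun t ↦ ?_
  push_cast
  field_simp
  norm_num

theorem exists_time_below_delta_general
    (Δ : ℕ → ℝ) (hnn : ∀ t, 0 ≤ Δ t)
    (δ C : ℝ) (hδ : 0 < δ) (hC : 0 < C)
    (hrec' : ∀ t : ℕ, δ ≤ Δ t → δ ≤ Δ (t + 1) →
      Δ (t + 1) - Δ t ≤ -(2 / ((t : ℝ) + 2)) * δ + (2 / ((t : ℝ) + 2)) ^ 2 * C / 2) :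
    ∃ t₀ : ℕ, Δ t₀ ≤ δ := by
  by_contra! above
  have diverges : Tendsto Δ atTop atBot :=
    tendsto_atBot_of_sub_le_neg_mul_add_sq hδ hC.le tendsto_sum_range_two_div_add_two
      summable_two_div_add_two_sq fun t ↦ hrec' t (above t).le (above (t + 1)).le
  obtain ⟨n, hn⟩ := (diverges.eventually (eventually_lt_atBot 0)).exists
  exact (hnn n).not_gt hn

/-- With the decreasing step size `η_t = 2/(t+2)` it is impossible that `Δ_t ≥ δ`
for all `t`: there is a finite time `t₀` with `Δ_{t₀} ≤ δ`. -/
theorem exists_time_below_delta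
    (Δ : ℕ → ℝ) (hnn : ∀ t, 0 ≤ Δ t)
    (δ C : ℝ) (hδ : 0 < δ) (hC : 0 < C)
    (hrec : ∀ t : ℕ, Δ (t + 1) - Δ t ≤
      -(2 / ((t : ℝ) + 2)) * min (Δ (t + 1)) δ + (2 / ((t : ℝ) + 2)) ^ 2 * C / 2)
    (hrec' : ∀ t : ℕ, δ ≤ Δ t → δ ≤ Δ (t + 1) →
      Δ (t + 1) - Δ t ≤ -(2 / ((t : ℝ) + 2)) * δ + (2 / ((t : ℝ) + 2)) ^ 2 * C / 2) :
    ∃ t₀ : ℕ, Δ t₀ ≤ δ :=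
  exists_time_below_delta_general Δ hnn δ C hδ hC hrec'
end

section
/- Let d : R^d → R be concave with maximum d* attained on Y*, and suppose the error bound d* − d(y) ≥ (1/(2δ)) min{α² dist(y,Y*)², α δ dist(y,Y*)} holds for all y, with α, δ > 0. If additionally d is differentiable, then for all y: ‖∇d(y)‖ ≥ (1/(2δ)) min{α² dist(y,Y*), α δ}, and also ‖∇d(y)‖ ≥ (α/√(2δ)) min{√(d* − d(y)), √(δ/2)}. -/
/-!
Restricting a concave function to the segment from `y` to a maximiser `y*` bounds the optimality
gap by the directional derivative, so `d* - d(y) ≤ ‖∇d(y)‖ · dist(y, Y*)`. Together with the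
error bound and `min (a r²) (b r) = r · min (a r) b`, dividing by `dist(y, Y*)` gives the first
estimate. For the second one compare squares: on the quadratic branch the first estimate bounds
`dist(y, Y*)` by `2δ‖∇d(y)‖ / α²`, whence `α² (d* - d(y)) ≤ 2δ ‖∇d(y)‖²`; on the linear branch it
reads `‖∇d(y)‖ ≥ α / 2`.
-/

open Set Metric

theorem ConcaveOn.sub_le_of_hasFDerivAt {E : Type*} [NormedAddCommGroup E] [NormedSpace ℝ E]
    {s : Set E} {f : E → ℝ} {f' : E →L[ℝ] ℝ} {x y : E} (hf : ConcaveOn ℝ s f)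
    (hx : x ∈ s) (hy : y ∈ s) (hf' : HasFDerivAt f f' x) : f y - f x ≤ f' (y - x) := by
  have hline : ConcaveOn ℝ (AffineMap.lineMap (k := ℝ) x y ⁻¹' s) (f ∘ AffineMap.lineMap x y) :=
    hf.comp_affineMap _
  have hderiv : HasDerivAt (f ∘ AffineMap.lineMap (k := ℝ) x y) (f' (y - x)) 0 := by
    refine HasFDerivAt.comp_hasDerivAt (0 : ℝ) ?_ AffineMap.hasDerivAt_lineMap
    simpa using hf'
  simpa [slope] using hline.slope_le_of_hasDerivAt (by simpa) (by simpa) one_pos hderiv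

theorem ConcaveOn.sub_le_norm_gradient_mul_dist {F : Type*} [NormedAddCommGroup F]
    [InnerProductSpace ℝ F] [CompleteSpace F] {s : Set F} {f : F → ℝ} {x y : F}
    (hf : ConcaveOn ℝ s f) (hx : x ∈ s) (hy : y ∈ s) (hfx : DifferentiableAt ℝ f x) :
    f y - f x ≤ ‖gradient f x‖ * dist x y := by
  have hnorm : ‖gradient f x‖ = ‖fderiv ℝ f x‖ :=
    (InnerProductSpace.toDual ℝ F).symm.norm_map _
  calc f y - f x ≤ fderiv ℝ f x (y - x) := hf.sub_le_of_hasFDerivAt hx hy hfx.hasFDerivAt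
    _ ≤ ‖fderiv ℝ f x‖ * ‖y - x‖ := le_of_abs_le ((fderiv ℝ f x).le_opNorm _)
    _ = ‖gradient f x‖ * dist x y := by rw [hnorm, dist_comm, dist_eq_norm]

theorem le_mul_infDist_of_forall_le_mul_dist {X : Type*} [PseudoMetricSpace X] {s : Set X}
    {x : X} {c G : ℝ} (hs : s.Nonempty) (hG : 0 ≤ G) (h : ∀ z ∈ s, c ≤ G * dist x z) :
    c ≤ G * infDist x s := by
  rcases hG.eq_or_lt with rfl | hG
  · obtain ⟨z, hz⟩ := hs
    simpa using h z hz
  · rw [← div_le_iff₀' hG]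
    exact (le_infDist hs).2 fun z hz => (div_le_iff₀' hG).2 (h z hz)

theorem ConcaveOn.sub_le_norm_gradient_mul_infDist {F : Type*} [NormedAddCommGroup F]
    [InnerProductSpace ℝ F] [CompleteSpace F] {f : F → ℝ} {s : Set F} {M : ℝ} {x : F}
    (hf : ConcaveOn ℝ univ f) (hfx : DifferentiableAt ℝ f x) (hs : s.Nonempty)
    (hM : ∀ z ∈ s, f z = M) : M - f x ≤ ‖gradient f x‖ * infDist x s :=
  le_mul_infDist_of_forall_le_mul_dist hs (norm_nonneg _) fun z hz =>
    hM z hz ▸ hf.sub_le_norm_gradient_mul_dist (mem_univ x) (mem_univ z) hfx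

theorem inv_two_mul_min_le_of_errorBound {α δ r e G : ℝ} (hδ : 0 ≤ δ) (hr : 0 ≤ r)
    (hG : 0 ≤ G) (he : e ≤ G * r)
    (herr : 1 / (2 * δ) * min (α ^ 2 * r ^ 2) (α * δ * r) ≤ e) :
    1 / (2 * δ) * min (α ^ 2 * r) (α * δ) ≤ G := by
  rcases hr.eq_or_lt with rfl | hr
  · refine (mul_nonpos_of_nonneg_of_nonpos (by positivity) ?_).trans hG
    simp
  · refine le_of_mul_le_mul_right ?_ hr
    calc 1 / (2 * δ) * min (α ^ 2 * r) (α * δ) * r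
        = 1 / (2 * δ) * min (α ^ 2 * r ^ 2) (α * δ * r) := by
          rw [mul_assoc, min_mul_of_nonneg _ _ hr.le]; ring_nf
      _ ≤ G * r := herr.trans he

theorem div_sqrt_mul_min_sqrt_le_of_errorBound {α δ r e G : ℝ} (hα : 0 ≤ α) (hδ : 0 < δ)
    (hG : 0 ≤ G) (he : e ≤ G * r) (hgrad : 1 / (2 * δ) * min (α ^ 2 * r) (α * δ) ≤ G) :
    α / √(2 * δ) * min √e √(δ / 2) ≤ G := by
  have hsq : α ^ 2 / (2 * δ) * min e (δ / 2) ≤ G ^ 2 := by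
    rcases min_cases (α ^ 2 * r) (α * δ) with ⟨hmin, -⟩ | ⟨hmin, -⟩ <;> rw [hmin] at hgrad
    · calc α ^ 2 / (2 * δ) * min e (δ / 2) ≤ α ^ 2 / (2 * δ) * (G * r) := by
            gcongr
            exact (min_le_left _ _).trans he
        _ = G * (1 / (2 * δ) * (α ^ 2 * r)) := by ring
        _ ≤ G ^ 2 := (mul_le_mul_of_nonneg_left hgrad hG).trans_eq (sq G).symm
    · have hhalf : α / 2 ≤ G := by
        convert hgrad using 1
        field_simp
      calc α ^ 2 / (2 * δ) * min e (δ / 2) ≤ α ^ 2 / (2 * δ) * (δ / 2) := by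
            gcongr
            exact min_le_right _ _
        _ = (α / 2) ^ 2 := by field_simp
        _ ≤ G ^ 2 := by gcongr
  calc α / √(2 * δ) * min √e √(δ / 2) = √(α ^ 2 / (2 * δ) * min e (δ / 2)) := by
        rw [Real.sqrt_mul (by positivity : 0 ≤ α ^ 2 / (2 * δ)),
          Real.sqrt_div' (α ^ 2) (by positivity : (0 : ℝ) ≤ 2 * δ), Real.sqrt_sq hα,
          Real.sqrt_monotone.map_min]
    _ ≤ √(G ^ 2) := Real.sqrt_le_sqrt hsq
    _ = G := Real.sqrt_sq hG

theorem gradient_lower_bounds_general {n : ℕ}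
    (d : EuclideanSpace ℝ (Fin n) → ℝ)
    (hconc : ConcaveOn ℝ univ d) (hd : Differentiable ℝ d)
    (Ystar : Set (EuclideanSpace ℝ (Fin n))) (hne : Ystar.Nonempty)
    (dstar : ℝ) (hatt : ∀ y ∈ Ystar, d y = dstar)
    (α δ : ℝ) (hα : 0 < α) (hδ : 0 < δ)
    (herr : ∀ y, dstar - d y ≥
      (1 / (2 * δ)) * min (α ^ 2 * infDist y Ystar ^ 2) (α * δ * infDist y Ystar)) :
    ∀ y,
      ‖gradient d y‖ ≥ (1 / (2 * δ)) * min (α ^ 2 * infDist y Ystar) (α * δ) ∧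
      ‖gradient d y‖ ≥
        (α / Real.sqrt (2 * δ)) * min (Real.sqrt (dstar - d y)) (Real.sqrt (δ / 2)) := by
  intro y
  have hgap : dstar - d y ≤ ‖gradient d y‖ * infDist y Ystar :=
    hconc.sub_le_norm_gradient_mul_infDist (hd y) hne hatt
  have hfirst := inv_two_mul_min_le_of_errorBound hδ.le infDist_nonneg (norm_nonneg _) hgap
    (herr y)
  exact ⟨hfirst,
    div_sqrt_mul_min_sqrt_le_of_errorBound hα.le hδ (norm_nonneg _) hgap hfirst⟩

/-- Gradient lower bounds from the error bound on the augmented dual function: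
`‖∇d(y)‖ ≥ (1/(2δ)) min{α² dist(y,Y*), αδ}` and
`‖∇d(y)‖ ≥ (α/√(2δ)) min{√(d* − d(y)), √(δ/2)}`. -/
theorem gradient_lower_bounds {n : ℕ}
    (d : EuclideanSpace ℝ (Fin n) → ℝ)
    (hconc : ConcaveOn ℝ univ d) (hd : Differentiable ℝ d)
    (Ystar : Set (EuclideanSpace ℝ (Fin n))) (hne : Ystar.Nonempty)
    (dstar : ℝ) (hub : ∀ y, d y ≤ dstar) (hatt : ∀ y ∈ Ystar, d y = dstar)
    (α δ : ℝ) (hα : 0 < α) (hδ : 0 < δ)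
    (herr : ∀ y, dstar - d y ≥
      (1 / (2 * δ)) * min (α ^ 2 * infDist y Ystar ^ 2) (α * δ * infDist y Ystar)) :
    ∀ y,
      ‖gradient d y‖ ≥ (1 / (2 * δ)) * min (α ^ 2 * infDist y Ystar) (α * δ) ∧
      ‖gradient d y‖ ≥
        (α / Real.sqrt (2 * δ)) * min (Real.sqrt (dstar - d y)) (Real.sqrt (δ / 2)) :=
  gradient_lower_bounds_general d hconc hd Ystar hne dstar hatt α δ hα hδ herr
end
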